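/- (Farkas Lemma, Version IV) Let Y be a d×p real matrix and V a d×q real matrix. For every z ∈ ℝᵈ, exactly one of the following alternatives holds: (a) there exist u ∈ ℝᵖ and t ∈ ℝ^q with u ≥ 0, t ≥ 0, u₁ + ⋯ + u_p = 1, and z = Yu + Vt; (b) there exist α ∈ ℝ and c ∈ ℝᵈ such that cᵀyᵢ ≥ α for every column yᵢ of Y (1 ≤ i ≤ p), cᵀvⱼ ≥ 0 for every column vⱼ of V (1 ≤ j ≤ q), and cᵀz < α. -/

import Mathlib

/-!
Homogenize: `z` lies in `conv {yᵢ} + cone {vⱼ}` iff `(z, 1)` lies in the cone generated by the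
points `(yᵢ, 1)` and `(vⱼ, 0)` of `ℝᵈ × ℝ`, and a linear functional `(x, s) ↦ cᵀx - α s` that is
nonnegative on these generators and negative at `(z, 1)` is exactly a certificate for (b). So the
theorem is Farkas' lemma for a finitely generated cone: a point outside a closed cone is separated
from it by a hyperplane through the origin. The cone is closed by the conic Carathéodory theorem:
it is the finite union of the cones generated by linearly independent subfamilies, each of which
is the image of a closed orthant under an injective linear map.
-/

open Finset

section Caratheodory

variable {𝕜 ι E : Type*} [Field 𝕜] [LinearOrder 𝕜] [IsStrictOrderedRing 𝕜]
  [AddCommGroup E] [Module 𝕜 E] (g : ι → E)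

theorem exists_sum_erase_eq_of_sum_smul_eq_zero [DecidableEq ι] {s : Finset ι} {w c : ι → 𝕜}
    (hw : ∀ i ∈ s, 0 ≤ w i) (hc : ∑ i ∈ s, c i • g i = 0) (hpos : ∃ i ∈ s, 0 < c i) :
    ∃ j ∈ s, ∃ w' : ι → 𝕜, (∀ i ∈ s.erase j, 0 ≤ w' i) ∧
      ∑ i ∈ s.erase j, w' i • g i = ∑ i ∈ s, w i • g i := by
  obtain ⟨j, hj, hmin⟩ := (s.filter (0 < c ·)).exists_min_image (fun i => w i / c i)
    (by simpa [Finset.filter_nonempty_iff] using hpos)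
  rw [mem_filter] at hj
  -- `r` is the largest step along `-c` keeping the weights nonnegative; it kills the weight at `j`.
  set r := w j / c j
  have hr : 0 ≤ r := div_nonneg (hw j hj.1) hj.2.le
  refine ⟨j, hj.1, w - r • c, fun i hi => ?_, ?_⟩
  · have hi := (mem_erase.1 hi).2
    simp only [Pi.sub_apply, Pi.smul_apply, smul_eq_mul, sub_nonneg]
    rcases lt_or_ge 0 (c i) with hci | hci
    · exact (le_div_iff₀ hci).1 (hmin i (mem_filter.2 ⟨hi, hci⟩))
    · exact (mul_nonpos_of_nonneg_of_nonpos hr hci).trans (hw i hi)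
  · have hwj : (w - r • c) j = 0 := by
      simp [r, div_mul_cancel₀ _ hj.2.ne']
    rw [sum_erase _ (by simp [hwj])]
    simp [sub_smul, mul_smul, sum_sub_distrib, ← smul_sum, hc]

theorem exists_sum_erase_eq_of_not_linearIndepOn [DecidableEq ι] {s : Finset ι} {w : ι → 𝕜}
    (hw : ∀ i ∈ s, 0 ≤ w i) (hs : ¬LinearIndepOn 𝕜 g s) :
    ∃ j ∈ s, ∃ w' : ι → 𝕜, (∀ i ∈ s.erase j, 0 ≤ w' i) ∧
      ∑ i ∈ s.erase j, w' i • g i = ∑ i ∈ s, w i • g i := by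
  obtain ⟨c, hc, i, hi, hci⟩ := not_linearIndepOn_finset_iff.1 hs
  rcases hci.lt_or_gt with hneg | hpos
  · refine exists_sum_erase_eq_of_sum_smul_eq_zero g hw (c := -c) ?_ ⟨i, hi, by simpa⟩
    simp [neg_smul, sum_neg_distrib, hc]
  · exact exists_sum_erase_eq_of_sum_smul_eq_zero g hw hc ⟨i, hi, hpos⟩

theorem exists_linearIndepOn_sum_smul_eq (s : Finset ι) {w : ι → 𝕜} (hw : ∀ i ∈ s, 0 ≤ w i) :
    ∃ t ⊆ s, LinearIndepOn 𝕜 g t ∧ ∃ w' : ι → 𝕜, (∀ i ∈ t, 0 ≤ w' i) ∧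
      ∑ i ∈ t, w' i • g i = ∑ i ∈ s, w i • g i := by
  classical
  induction s using Finset.strongInduction generalizing w with
  | H s ih =>
    by_cases hs : LinearIndepOn 𝕜 g s
    · exact ⟨s, subset_rfl, hs, w, hw, rfl⟩
    obtain ⟨j, hj, w', hw', hsum⟩ := exists_sum_erase_eq_of_not_linearIndepOn g hw hs
    obtain ⟨t, hts, ht, w'', hw'', hsum'⟩ := ih _ (erase_ssubset hj) hw'
    exact ⟨t, hts.trans (erase_subset j s), ht, w'', hw'', hsum'.trans hsum⟩

end Caratheodory

namespace PointedCone

open Set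

section Algebra

variable {𝕜 ι E : Type*} [Field 𝕜] [LinearOrder 𝕜] [IsStrictOrderedRing 𝕜]
  [AddCommGroup E] [Module 𝕜 E] [Fintype ι] (g : ι → E)

theorem mem_hull_range_iff {x : E} :
    x ∈ hull 𝕜 (range g) ↔ ∃ w : ι → 𝕜, 0 ≤ w ∧ ∑ i, w i • g i = x := by
  rw [Submodule.mem_span_range_iff_exists_fun]
  constructor
  · rintro ⟨c, rfl⟩
    exact ⟨fun i => c i, fun i => (c i).2, rfl⟩
  · rintro ⟨w, hw, rfl⟩
    exact ⟨fun i => ⟨w i, hw i⟩, rfl⟩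

theorem coe_hull_range_eq_image :
    (hull 𝕜 (range g) : Set E) = Fintype.linearCombination 𝕜 g '' Ici 0 := by
  ext x
  simp [mem_hull_range_iff, Fintype.linearCombination_apply]

theorem apply_nonneg_of_mem_hull_range {x : E} (hx : x ∈ hull 𝕜 (range g))
    (f : Module.Dual 𝕜 E) (hf : ∀ i, 0 ≤ f (g i)) : 0 ≤ f x := by
  obtain ⟨w, hw, rfl⟩ := (mem_hull_range_iff g).1 hx
  simpa using sum_nonneg fun i _ => mul_nonneg (hw i) (hf i)

end Algebra

section Topology

variable {ι E : Type*} [AddCommGroup E] [Module ℝ E] [TopologicalSpace E]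
  [IsTopologicalAddGroup E] [ContinuousSMul ℝ E] [T2Space E] [Fintype ι]

theorem isClosed_hull_range_of_linearIndependent {g : ι → E} (hg : LinearIndependent ℝ g) :
    IsClosed (hull ℝ (range g) : Set E) := by
  rw [coe_hull_range_eq_image]
  have : Topology.IsClosedEmbedding (Fintype.linearCombination ℝ g) :=
    LinearMap.isClosedEmbedding_of_injective <| LinearMap.ker_eq_bot.2 <|
      linearIndependent_iff_injective_fintypeLinearCombination.1 hg
  exact this.isClosedMap _ isClosed_Ici

theorem isClosed_hull_range (g : ι → E) : IsClosed (hull ℝ (range g) : Set E) := by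
  classical
  have hunion : (hull ℝ (range g) : Set E) = ⋃ t : {t : Finset ι // LinearIndepOn ℝ g t},
      hull ℝ (range fun i : (t.1 : Set ι) => g i) := by
    refine Subset.antisymm (fun x hx => ?_) (iUnion_subset fun t => ?_)
    · obtain ⟨w, hw, rfl⟩ := (mem_hull_range_iff g).1 hx
      obtain ⟨t, -, ht, w', hw', hsum⟩ := exists_linearIndepOn_sum_smul_eq g univ fun i _ => hw i
      refine mem_iUnion.2 ⟨⟨t, ht⟩, (mem_hull_range_iff _).2 ⟨fun i => w' i, fun i => hw' i i.2,
        ?_⟩⟩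
      rw [← hsum, ← sum_coe_sort t]
      rfl
    · exact Submodule.span_mono (range_comp_subset_range _ g)
  rw [hunion]
  exact isClosed_iUnion_of_finite fun t => isClosed_hull_range_of_linearIndependent t.2

end Topology

theorem mem_hull_range_xor_exists_dual {ι E : Type*} [Fintype ι] [NormedAddCommGroup E]
    [NormedSpace ℝ E] [FiniteDimensional ℝ E] (g : ι → E) (x : E) :
    Xor (x ∈ hull ℝ (range g)) (∃ f : Module.Dual ℝ E, (∀ i, 0 ≤ f (g i)) ∧ f x < 0) := by
  by_cases hx : x ∈ hull ℝ (range g)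
  · exact .inl ⟨hx, fun ⟨f, hf, hfx⟩ => hfx.not_ge (apply_nonneg_of_mem_hull_range g hx f hf)⟩
  · let C : ProperCone ℝ E := ⟨hull ℝ (range g), isClosed_hull_range g⟩
    obtain ⟨f, hf, hfx⟩ := C.hyperplane_separation_point hx
    exact .inr ⟨⟨f, fun i => hf _ (subset_hull (mem_range_self i)), hfx⟩, hx⟩

end PointedCone

section Homogenization

open Matrix

variable {m n₁ n₂ : Type*} (Y : Matrix m n₁ ℝ) (V : Matrix m n₂ ℝ)

def liftColumns : n₁ ⊕ n₂ → (m → ℝ) × ℝ :=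
  Sum.elim (fun i => (Yᵀ i, 1)) (fun j => (Vᵀ j, 0))

theorem sum_smul_liftColumns [Fintype n₁] [Fintype n₂] (w : n₁ ⊕ n₂ → ℝ) :
    ∑ i, w i • liftColumns Y V i =
      (Y *ᵥ (w ∘ Sum.inl) + V *ᵥ (w ∘ Sum.inr), ∑ i, w (Sum.inl i)) := by
  ext k
  · simp [liftColumns, Fintype.sum_sum_type, Prod.fst_sum, Finset.sum_apply, mulVec, dotProduct,
      mul_comm]
  · simp [liftColumns, Fintype.sum_sum_type, Prod.snd_sum]

theorem Module.Dual.apply_prod_eq [Fintype m] [DecidableEq m] (f : Module.Dual ℝ ((m → ℝ) × ℝ))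
    (x : m → ℝ) (s : ℝ) :
    f (x, s) = ∑ k, f (Pi.single k 1, 0) * x k + f (0, 1) * s := by
  have : (x, s) = ∑ k, x k • ((Pi.single k 1 : m → ℝ), (0 : ℝ)) + s • ((0 : m → ℝ), (1 : ℝ)) := by
    ext <;> simp [Prod.fst_sum, Prod.snd_sum, Finset.sum_apply, Pi.single_apply]
  rw [this]
  simp only [map_add, map_sum, map_smul, smul_eq_mul, mul_comm]

theorem mem_hull_range_liftColumns_iff [Fintype n₁] [Fintype n₂] (z : m → ℝ) :
    (z, 1) ∈ PointedCone.hull ℝ (Set.range (liftColumns Y V)) ↔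
      ∃ (u : n₁ → ℝ) (t : n₂ → ℝ), (∀ i, 0 ≤ u i) ∧ (∀ j, 0 ≤ t j) ∧ ∑ i, u i = 1 ∧
        z = Y *ᵥ u + V *ᵥ t := by
  simp only [PointedCone.mem_hull_range_iff, sum_smul_liftColumns, Prod.ext_iff]
  constructor
  · rintro ⟨w, hw, hz, hsum⟩
    exact ⟨w ∘ Sum.inl, w ∘ Sum.inr, fun i => hw _, fun j => hw _, hsum, hz.symm⟩
  · rintro ⟨u, t, hu, ht, hsum, hz⟩
    exact ⟨Sum.elim u t, Sum.forall.2 ⟨hu, ht⟩, hz.symm, hsum⟩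

theorem exists_dual_liftColumns_iff [Fintype m] [DecidableEq m] (z : m → ℝ) :
    (∃ f : Module.Dual ℝ ((m → ℝ) × ℝ), (∀ i, 0 ≤ f (liftColumns Y V i)) ∧ f (z, 1) < 0) ↔
      ∃ (α : ℝ) (c : m → ℝ), (∀ i, α ≤ ∑ k, c k * Y k i) ∧ (∀ j, 0 ≤ ∑ k, c k * V k j) ∧
        ∑ k, c k * z k < α := by
  constructor
  · rintro ⟨f, hf, hz⟩
    have hfY i := Module.Dual.apply_prod_eq f (Yᵀ i) 1 ▸ hf (Sum.inl i)
    have hfV j := Module.Dual.apply_prod_eq f (Vᵀ j) 0 ▸ hf (Sum.inr j)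
    rw [Module.Dual.apply_prod_eq] at hz
    simp only [transpose_apply, mul_one, mul_zero, add_zero] at hfY hfV hz
    exact ⟨-f (0, 1), fun k => f (Pi.single k 1, 0), fun i => by linarith [hfY i], hfV,
      by linarith⟩
  · rintro ⟨α, c, hY, hV, hz⟩
    refine ⟨(dotProductEquiv ℝ m c).coprod (-α • LinearMap.id),
      Sum.forall.2 ⟨fun i => ?_, fun j => ?_⟩, ?_⟩
    all_goals simp only [liftColumns, Sum.elim_inl, Sum.elim_inr, LinearMap.coprod_apply,
      dotProductEquiv_apply_apply, dotProduct, transpose_apply, LinearMap.smul_apply,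
      LinearMap.id_apply, smul_eq_mul]
    · linarith [hY i]
    · linarith [hV j]
    · linarith

end Homogenization

theorem farkas_version_IV (d p q : ℕ)
    (Y : Matrix (Fin d) (Fin p) ℝ) (V : Matrix (Fin d) (Fin q) ℝ)
    (z : Fin d → ℝ) :
    Xor'
      (∃ (u : Fin p → ℝ) (t : Fin q → ℝ),
        (∀ i, 0 ≤ u i) ∧ (∀ j, 0 ≤ t j) ∧ (∑ i, u i) = 1 ∧
        z = Y.mulVec u + V.mulVec t)
      (∃ (α : ℝ) (c : Fin d → ℝ),
        (∀ i : Fin p, α ≤ ∑ k, c k * Y k i) ∧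
        (∀ j : Fin q, 0 ≤ ∑ k, c k * V k j) ∧
        (∑ k, c k * z k) < α) := by
  rw [← mem_hull_range_liftColumns_iff, ← exists_dual_liftColumns_iff]
  exact PointedCone.mem_hull_range_xor_exists_dual (liftColumns Y V) (z, 1)
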